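/- Let g be a function on 3×3 matrices satisfying g(Q A Qᵀ) = g(A) for all orthogonal Q, and suppose g is odd, i.e., g(-A) = -g(A) for all A. Then the function f defined on Hall tensors by f(K) := g((1/2)εK) satisfies f(⟨Q⟩K) = f(K) for all orthogonal Q with det Q = 1; i.e., f is a hemitropic invariant of the Hall tensor. -/

import Mathlib

/-! Contracting the Levi-Civita symbol with two copies of `Q` produces the cofactor matrix
`cof Q = adj(Q)ᵀ`, since `(Q a) × (Q b) = (cof Q) (a × b)`. Hence `ε⟨Q⟩K = (cof Q) (εK) Qᵀ` for
every `Q`. For a rotation `cof Q = Q`, so `(1/2) ε⟨Q⟩K = Q ((1/2) εK) Qᵀ`, and the orthogonal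
invariance of `g` finishes the proof. -/

open Matrix

/-- The Levi-Civita symbol on `Fin 3`. -/
noncomputable def lc (i j k : Fin 3) : ℝ :=
  ((((j.val : ℤ) - i.val) * ((k.val : ℤ) - j.val) * ((k.val : ℤ) - i.val)) / 2 : ℤ)

/-- The Hall tensor `εA` associated to a 3×3 matrix: `k_{ijk} = Σ_l ε_{ijl} a_{lk}`. -/
noncomputable def toHall (A : Matrix (Fin 3) (Fin 3) ℝ) : Fin 3 → Fin 3 → Fin 3 → ℝ :=
  fun i j k => ∑ l, lc i j l * A l k

/-- The matrix `εK` associated to a third order tensor: `(εK)_{ij} = Σ_{k,l} ε_{kli} k_{klj}`. -/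
noncomputable def toMat (K : Fin 3 → Fin 3 → Fin 3 → ℝ) : Matrix (Fin 3) (Fin 3) ℝ :=
  Matrix.of fun i j => ∑ k, ∑ l, lc k l i * K k l j

/-- Orthogonal transformation of a third order tensor. -/
noncomputable def rot (Q : Matrix (Fin 3) (Fin 3) ℝ) (K : Fin 3 → Fin 3 → Fin 3 → ℝ) :
    Fin 3 → Fin 3 → Fin 3 → ℝ :=
  fun i j k => ∑ p, ∑ q, ∑ r, Q i p * Q j q * Q k r * K p q r

/-- Symmetric part of a matrix. -/
noncomputable def symmPart (A : Matrix (Fin 3) (Fin 3) ℝ) : Matrix (Fin 3) (Fin 3) ℝ :=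
  (1/2 : ℝ) • (A + Aᵀ)

/-- Skew-symmetric part of a matrix. -/
noncomputable def skewPart (A : Matrix (Fin 3) (Fin 3) ℝ) : Matrix (Fin 3) (Fin 3) ℝ :=
  (1/2 : ℝ) • (A - Aᵀ)

lemma lc_eq (i j k : Fin 3) :
    lc i j k = ![![![0, 0, 0], ![0, 0, 1], ![0, -1, 0]],
      ![![0, 0, -1], ![0, 0, 0], ![1, 0, 0]],
      ![![0, 1, 0], ![-1, 0, 0], ![0, 0, 0]]] i j k := by
  fin_cases i <;> fin_cases j <;> fin_cases k <;> norm_num [lc]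

lemma sum_lc_mul_mul_eq_sum_lc_mul_adjugate (Q : Matrix (Fin 3) (Fin 3) ℝ) (p q i : Fin 3) :
    ∑ k, ∑ l, lc k l i * (Q k p * Q l q) = ∑ m, lc p q m * Q.adjugate m i := by
  simp only [Fin.sum_univ_three, lc_eq]
  fin_cases p <;> fin_cases q <;> fin_cases i <;> simp [adjugate_fin_three] <;> ring

lemma toMat_rot (Q : Matrix (Fin 3) (Fin 3) ℝ) (K : Fin 3 → Fin 3 → Fin 3 → ℝ) :
    toMat (rot Q K) = Q.adjugateᵀ * toMat K * Qᵀ := by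
  ext i j
  calc toMat (rot Q K) i j
      = ∑ p, ∑ q, ∑ r, (∑ k, ∑ l, lc k l i * (Q k p * Q l q)) * Q j r * K p q r := by
        simp only [toMat, rot, of_apply, Fin.sum_univ_three]
        ring
    _ = ∑ p, ∑ q, ∑ r, (∑ m, lc p q m * Q.adjugate m i) * Q j r * K p q r := by
        simp only [sum_lc_mul_mul_eq_sum_lc_mul_adjugate]
    _ = (Q.adjugateᵀ * toMat K * Qᵀ) i j := by
        simp only [toMat, mul_apply, of_apply, transpose_apply, Fin.sum_univ_three]
        ring

lemma adjugate_eq_transpose_of_det_eq_one {n R : Type*} [Fintype n] [DecidableEq n] [CommRing R]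
    {Q : Matrix n n R} (hQ : Qᵀ * Q = 1) (hdet : Q.det = 1) : Q.adjugate = Qᵀ :=
  calc Q.adjugate = Q.adjugate * (Q * Qᵀ) := by rw [mul_eq_one_comm.mp hQ, mul_one]
    _ = Qᵀ := by rw [← mul_assoc, adjugate_mul, hdet, one_smul, one_mul]

lemma toMat_rot_of_det_eq_one {Q : Matrix (Fin 3) (Fin 3) ℝ} (hQ : Qᵀ * Q = 1) (hdet : Q.det = 1)
    (K : Fin 3 → Fin 3 → Fin 3 → ℝ) : toMat (rot Q K) = Q * toMat K * Qᵀ := by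
  rw [toMat_rot, adjugate_eq_transpose_of_det_eq_one hQ hdet, transpose_transpose]

theorem hemitropic_of_odd_invariant_general
    (g : Matrix (Fin 3) (Fin 3) ℝ → ℝ)
    (hg : ∀ (Q A : Matrix (Fin 3) (Fin 3) ℝ), Qᵀ * Q = 1 → g (Q * A * Qᵀ) = g A)
    (f : (Fin 3 → Fin 3 → Fin 3 → ℝ) → ℝ)
    (hf : ∀ K, f K = g ((1/2 : ℝ) • toMat K)) :
    ∀ (Q : Matrix (Fin 3) (Fin 3) ℝ), Qᵀ * Q = 1 → Q.det = 1 →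
      ∀ K : Fin 3 → Fin 3 → Fin 3 → ℝ, (∀ i j k, K i j k = - K j i k) →
        f (rot Q K) = f K := by
  intro Q hQ hdet K _
  rw [hf, hf, toMat_rot_of_det_eq_one hQ hdet, ← Matrix.smul_mul, ← Matrix.mul_smul, hg Q _ hQ]

/-- An odd orthogonally-invariant function of `(1/2)εK` is a hemitropic
invariant of the Hall tensor `K`. -/
theorem hemitropic_of_odd_invariant
    (g : Matrix (Fin 3) (Fin 3) ℝ → ℝ)
    (hg : ∀ (Q A : Matrix (Fin 3) (Fin 3) ℝ), Qᵀ * Q = 1 → g (Q * A * Qᵀ) = g A)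
    (hodd : ∀ A, g (-A) = - g A)
    (f : (Fin 3 → Fin 3 → Fin 3 → ℝ) → ℝ)
    (hf : ∀ K, f K = g ((1/2 : ℝ) • toMat K)) :
    ∀ (Q : Matrix (Fin 3) (Fin 3) ℝ), Qᵀ * Q = 1 → Q.det = 1 →
      ∀ K : Fin 3 → Fin 3 → Fin 3 → ℝ, (∀ i j k, K i j k = - K j i k) →
        f (rot Q K) = f K :=
  hemitropic_of_odd_invariant_general g hg f hf
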